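/- The counting function ζ(m,3) of 3-deviation sets satisfies ζ(m,3) = ((2+√2)^⌊(m+1)/2⌋ + (2−√2)^⌊(m+1)/2⌋)/4 for all m ≥ 1. -/

import Mathlib

/-!
Cutting every part of a deviation sequence into unit steps turns it into a `±1` walk whose first
step is up, which stays in `[-δ, δ]` and ends in `[-1, 1]`; the maximal runs of the walk recover
the parts. For `δ = 3`, the numbers of such walks from the positions `1` and `3` evolve over two
steps by the matrix `!![3, 1; 1, 1]`, whose characteristic polynomial `X ^ 2 - 4 * X + 2` has the
roots `2 ± √2`.
-/

/-- `α` is a `δ`-deviation set of size `m`: a finite sequence of positive integers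
summing to `m`, whose total alternating sum has absolute value at most `1`,
and all of whose partial alternating sums have absolute value at most `δ`. -/
def IsDevSet (m δ : ℕ) (α : List ℕ) : Prop :=
  (∀ a ∈ α, 0 < a) ∧ α.sum = m ∧
  |∑ i ∈ Finset.range α.length, (-1 : ℤ) ^ i * (α.getD i 0 : ℤ)| ≤ 1 ∧
  ∀ k : ℕ, |∑ i ∈ Finset.range k, (-1 : ℤ) ^ i * (α.getD i 0 : ℤ)| ≤ (δ : ℤ)

/-- `zeta m δ` is the number of `δ`-deviation sets of size `m`. -/
noncomputable def zeta (m δ : ℕ) : ℕ := Nat.card {α : List ℕ // IsDevSet m δ α}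

def altSum (l : List ℕ) (k : ℕ) : ℤ :=
  ∑ i ∈ Finset.range k, (-1 : ℤ) ^ i * (l.getD i 0 : ℤ)

@[simp] theorem altSum_nil (k : ℕ) : altSum [] k = 0 := by simp [altSum]

@[simp] theorem altSum_zero (l : List ℕ) : altSum l 0 = 0 := by simp [altSum]

theorem altSum_cons_succ (a : ℕ) (l : List ℕ) (k : ℕ) :
    altSum (a :: l) (k + 1) = a - altSum l k := by
  simp only [altSum, Finset.sum_range_succ', List.getD_cons_succ, List.getD_cons_zero, pow_succ,
    pow_zero, one_mul, mul_neg_one, neg_mul, Finset.sum_neg_distrib]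
  ring

/-- `IsDevFrom δ s l`: appending `l` to a sequence whose alternating partial sum is `s`, signed so
that the next part is added, keeps every partial sum in `[-δ, δ]` and ends in `[-1, 1]`. -/
def IsDevFrom (δ : ℕ) : ℤ → List ℕ → Prop
  | s, [] => |s| ≤ 1 ∧ |s| ≤ δ
  | s, a :: l => |s| ≤ δ ∧ 0 < a ∧ IsDevFrom δ (-(s + a)) l

theorem isDevFrom_iff (δ : ℕ) (s : ℤ) (l : List ℕ) :
    IsDevFrom δ s l ↔
      (∀ a ∈ l, 0 < a) ∧ |s + altSum l l.length| ≤ 1 ∧ ∀ k, |s + altSum l k| ≤ δ := by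
  induction l generalizing s with
  | nil => simp [IsDevFrom]
  | cons a l ih =>
    have flip : ∀ x : ℤ, |s + (a - x)| = |-(s + a) + x| := fun x => by
      rw [← abs_neg]; ring_nf
    simp only [IsDevFrom, ih, List.mem_cons, forall_eq_or_imp, List.length_cons,
      altSum_cons_succ, flip, ← Nat.and_forall_add_one (p := fun k => |s + altSum (a :: l) k| ≤ δ),
      altSum_zero, add_zero]
    tauto

theorem IsDevFrom.abs_le {δ : ℕ} {s : ℤ} {l : List ℕ} (h : IsDevFrom δ s l) :
    |s| ≤ δ := by
  cases l with
  | nil => exact h.2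
  | cons => exact h.1

theorem isDevFrom_cons_one {δ : ℕ} {s : ℤ} {l : List ℕ} :
    IsDevFrom δ s (1 :: l) ↔ |s| ≤ δ ∧ IsDevFrom δ (-(s + 1)) l := by
  simp [IsDevFrom]

theorem isDevFrom_cons_succ {δ b : ℕ} {s : ℤ} {l : List ℕ} (hb : 0 < b) :
    IsDevFrom δ s ((b + 1) :: l) ↔ |s| ≤ δ ∧ IsDevFrom δ (s + 1) (b :: l) := by
  have hsum : -(s + ((b + 1 : ℕ) : ℤ)) = -(s + 1 + b) := by push_cast; ring
  simp only [IsDevFrom, hsum, Nat.succ_pos, hb, true_and]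
  refine ⟨fun ⟨hs, ht⟩ => ⟨hs, ?_, ht⟩, fun ⟨hs, _, ht⟩ => ⟨hs, ht⟩⟩
  have := ht.abs_le
  rw [abs_neg] at this
  rw [abs_le] at hs this ⊢
  omega

def devFrom (δ m : ℕ) (s : ℤ) : Set (List ℕ) := {l | l.sum = m ∧ IsDevFrom δ s l}

theorem devFrom_eq_empty {δ m : ℕ} {s : ℤ} (hs : ¬|s| ≤ δ) : devFrom δ m s = ∅ :=
  Set.eq_empty_of_forall_notMem fun _ hl => hs hl.2.abs_le

theorem mem_devFrom_one {δ : ℕ} {s : ℤ} {l : List ℕ} :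
    l ∈ devFrom δ 1 s ↔ l = [1] ∧ IsDevFrom δ s [1] := by
  refine ⟨fun ⟨hsum, hl⟩ => ?_, fun ⟨hl, h⟩ => hl ▸ ⟨rfl, h⟩⟩
  have hpos := ((isDevFrom_iff δ s l).1 hl).1
  match l, hsum, hpos with
  | [], hsum, _ => simp at hsum
  | a :: t, hsum, hpos =>
    have ha := hpos a (by simp)
    have ht : t.sum = 0 := by simp only [List.sum_cons] at hsum; omega
    have ht' : t = [] := List.eq_nil_iff_forall_not_mem.2 fun b hb =>
      (hpos b (by simp [hb])).ne' (List.sum_eq_zero_iff.1 ht b hb)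
    obtain rfl : a = 1 := by simp [ht'] at hsum; omega
    subst ht'
    exact ⟨rfl, hl⟩

theorem devFrom_succ {δ m : ℕ} {s : ℤ} (hm : m ≠ 0) (hs : |s| ≤ δ) :
    devFrom δ (m + 1) s =
      List.cons 1 '' devFrom δ m (-(s + 1)) ∪ List.modifyHead (· + 1) '' devFrom δ m (s + 1) := by
  ext l
  simp only [devFrom, Set.mem_union, Set.mem_image, Set.mem_ofPred_eq]
  constructor
  · rintro ⟨hsum, hl⟩
    match l, hsum, hl with
    | [], hsum, _ => simp at hsum
    | 1 :: t, hsum, hl =>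
      refine Or.inl ⟨t, ⟨by simp only [List.sum_cons] at hsum; omega, ?_⟩, rfl⟩
      exact (isDevFrom_cons_one.1 hl).2
    | (b + 2) :: t, hsum, hl =>
      refine Or.inr ⟨(b + 1) :: t, ⟨by simp only [List.sum_cons] at hsum ⊢; omega, ?_⟩, rfl⟩
      exact (isDevFrom_cons_succ (Nat.succ_pos b)).1 hl |>.2
    | 0 :: t, _, hl => exact absurd hl.2.1 (lt_irrefl 0)
  · rintro (⟨t, ⟨hsum, ht⟩, rfl⟩ | ⟨t, ⟨hsum, ht⟩, rfl⟩)
    · exact ⟨by simp only [List.sum_cons, hsum]; omega, isDevFrom_cons_one.2 ⟨hs, ht⟩⟩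
    · match t, hsum, ht with
      | [], hsum, _ => exact absurd hsum.symm hm
      | b :: t, hsum, ht =>
        have hb : 0 < b := ht.2.1
        refine ⟨?_, (isDevFrom_cons_succ hb).2 ⟨hs, ht⟩⟩
        simp only [List.modifyHead_cons, List.sum_cons] at hsum ⊢
        omega

theorem encard_devFrom_succ_of_ne_zero {δ m : ℕ} {s : ℤ} (hm : m ≠ 0) (hs : |s| ≤ δ) :
    (devFrom δ (m + 1) s).encard =
      (devFrom δ m (-(s + 1))).encard + (devFrom δ m (s + 1)).encard := by
  have hinj : Function.Injective (List.modifyHead (· + 1) : List ℕ → List ℕ) := by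
    rintro (_ | ⟨a, s⟩) (_ | ⟨b, t⟩) h <;> simp_all
  rw [devFrom_succ hm hs, Set.encard_union_eq, List.cons_injective.injOn.encard_image,
    hinj.injOn.encard_image]
  rw [Set.disjoint_left]
  rintro _ ⟨t, -, rfl⟩ ⟨(_ | ⟨b, u⟩), ⟨hsum, hu⟩, h⟩
  · exact hm hsum.symm
  · have : b = 0 := (by simpa using h : b = 0 ∧ u = t).1
    exact absurd hu.2.1 (by omega)

/-- The number of `±1` walks of length `m` from `p` that stay in `[-δ, δ]` and end in
`[-1, 1]`. -/
def walkCount (δ : ℕ) : ℕ → ℤ → ℕ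
  | 0, p => if |p| ≤ 1 ∧ |p| ≤ δ then 1 else 0
  | m + 1, p => if |p| ≤ δ then walkCount δ m (p - 1) + walkCount δ m (p + 1) else 0

theorem walkCount_neg (δ m : ℕ) (p : ℤ) : walkCount δ m (-p) = walkCount δ m p := by
  induction m generalizing p with
  | zero => simp [walkCount]
  | succ m ih =>
    simp only [walkCount, abs_neg, show -p - 1 = -(p + 1) by ring, show -p + 1 = -(p - 1) by ring,
      ih, add_comm]

theorem encard_devFrom_succ (δ m : ℕ) {s : ℤ} (hs : |s| ≤ δ) :
    (devFrom δ (m + 1) s).encard = walkCount δ m (s + 1) := by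
  induction m generalizing s with
  | zero =>
    have hone : IsDevFrom δ s [1] ↔ |s + 1| ≤ 1 ∧ |s + 1| ≤ δ := by
      simp only [IsDevFrom, abs_neg, Nat.cast_one, zero_lt_one, hs, true_and]
    by_cases h : IsDevFrom δ s [1]
    · have : devFrom δ 1 s = {[1]} := by ext l; simp [mem_devFrom_one, h]
      rw [this, Set.encard_singleton, walkCount, if_pos (hone.1 h), Nat.cast_one]
    · have : devFrom δ 1 s = ∅ := by ext l; simp [mem_devFrom_one, h]
      rw [this, Set.encard_empty, walkCount, if_neg (hone.not.1 h), Nat.cast_zero]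
  | succ m ih =>
    rw [encard_devFrom_succ_of_ne_zero m.succ_ne_zero hs, walkCount]
    by_cases hs' : |s + 1| ≤ δ
    · rw [ih (by rwa [abs_neg]), ih hs', if_pos hs', show -(s + 1) + 1 = -s by ring,
        walkCount_neg, add_sub_cancel_right, Nat.cast_add]
    · rw [devFrom_eq_empty hs', devFrom_eq_empty (by rwa [abs_neg]), if_neg hs']
      simp

theorem setOf_isDevSet (m δ : ℕ) : {α | IsDevSet m δ α} = devFrom δ m 0 := by
  ext α
  have h := isDevFrom_iff δ 0 α
  simp only [zero_add] at h
  exact ⟨fun ⟨hpos, hsum, hend, hpart⟩ => ⟨hsum, h.2 ⟨hpos, hend, hpart⟩⟩,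
    fun ⟨hsum, hα⟩ => let ⟨hpos, hend, hpart⟩ := h.1 hα; ⟨hpos, hsum, hend, hpart⟩⟩

theorem zeta_succ_eq_walkCount (m δ : ℕ) : zeta (m + 1) δ = walkCount δ m 1 := by
  rw [zeta, ← Set.coe_ofPred, Nat.card_coe_set_eq, Set.ncard_def, setOf_isDevSet,
    encard_devFrom_succ δ m (by simp), zero_add, ENat.toNat_natCast]

theorem walkCount_three_add_two_one (m : ℕ) :
    walkCount 3 (m + 2) 1 = 3 * walkCount 3 m 1 + walkCount 3 m 3 := by
  have h := walkCount_neg 3 m 1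
  simp only [walkCount] at h ⊢
  norm_num [h]
  ring

theorem walkCount_three_add_two_three (m : ℕ) :
    walkCount 3 (m + 2) 3 = walkCount 3 m 1 + walkCount 3 m 3 := by
  simp only [walkCount]
  norm_num

theorem walkCount_three_add_four (m : ℕ) :
    (walkCount 3 (m + 4) 1 : ℤ) = 4 * walkCount 3 (m + 2) 1 - 2 * walkCount 3 m 1 := by
  have h₁ := walkCount_three_add_two_one m
  have h₂ : walkCount 3 (m + 4) 1 = _ := walkCount_three_add_two_one (m + 2)
  have h₃ := walkCount_three_add_two_three m
  omega

theorem pow_add_two_of_sq {x : ℝ} (hx : x ^ 2 = 4 * x - 2) (n : ℕ) :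
    x ^ (n + 2) = 4 * x ^ (n + 1) - 2 * x ^ n := by
  linear_combination x ^ n * hx

theorem walkCount_three_one (m : ℕ) :
    (walkCount 3 m 1 : ℝ) =
      ((2 + Real.sqrt 2) ^ ((m + 2) / 2) + (2 - Real.sqrt 2) ^ ((m + 2) / 2)) / 4 := by
  have hsqrt : Real.sqrt 2 ^ 2 = 2 := Real.sq_sqrt zero_le_two
  have hp : (2 + Real.sqrt 2) ^ 2 = 4 * (2 + Real.sqrt 2) - 2 := by linear_combination hsqrt
  have hm : (2 - Real.sqrt 2) ^ 2 = 4 * (2 - Real.sqrt 2) - 2 := by linear_combination hsqrt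
  induction m using Nat.strong_induction_on with
  | _ m ih =>
    match m with
    | 0 | 1 => norm_num [show walkCount 3 0 1 = 1 by decide, show walkCount 3 1 1 = 1 by decide]
    | 2 | 3 =>
      norm_num [show walkCount 3 2 1 = 3 by decide, show walkCount 3 3 1 = 3 by decide]
      linear_combination (-1 / 2 : ℝ) * hsqrt
    | m + 4 =>
      have hrec : (walkCount 3 (m + 4) 1 : ℝ) =
          4 * walkCount 3 (m + 2) 1 - 2 * walkCount 3 m 1 := by
        exact_mod_cast walkCount_three_add_four m
      rw [hrec, ih (m + 2) (by omega), ih m (by omega),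
        show (m + 4 + 2) / 2 = (m + 2) / 2 + 2 by omega,
        show (m + 2 + 2) / 2 = (m + 2) / 2 + 1 by omega, pow_add_two_of_sq hp, pow_add_two_of_sq hm]
      ring

/-- `ζ(m,3) = ((2+√2)^⌊(m+1)/2⌋ + (2−√2)^⌊(m+1)/2⌋)/4` for all `m ≥ 1`. -/
theorem zeta_three (m : ℕ) (hm : 1 ≤ m) :
    (zeta m 3 : ℝ) =
      ((2 + Real.sqrt 2) ^ ((m + 1) / 2) + (2 - Real.sqrt 2) ^ ((m + 1) / 2)) / 4 := by
  obtain ⟨n, rfl⟩ := Nat.exists_eq_add_of_le' hm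
  rw [zeta_succ_eq_walkCount, walkCount_three_one]
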